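/- Let H be a separable infinite-dimensional Hilbert space and let U denote the complete metric space of unitary operators on H with the strong* operator topology. Then the set of weakly stable unitary operators (those U with ⟨U^n x, y⟩ → 0 for all x, y ∈ H) is of first category (meager) in U. -/

import Mathlib

open Filter Topology

/-- The strong* operator topology on the set of unitary operators on a Hilbert space:
induced by pointwise (strong) convergence of the operators and of their adjoints. -/
noncomputable def strongStarUnitaryTopology {H : Type*} [NormedAddCommGroup H]
    [InnerProductSpace ℂ H] [CompleteSpace H] :
    TopologicalSpace {U : H →L[ℂ] H // U ∈ unitary (H →L[ℂ] H)} :=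
  TopologicalSpace.induced
    (fun U => ((fun x => U.1 x, fun x => ContinuousLinearMap.adjoint U.1 x) :
      (H → H) × (H → H))) inferInstance

/-!
Fix a unit vector `x`. For every `N`, the unitaries `U` with `‖⟪Uⁿ x, x⟫‖ > 1/2` for some
`n ≥ N` form an open set, and this set is dense. A strong* neighbourhood of `U` only constrains
`U` and `U*` on a finite set `s`. The restriction of `U` to the span `S` of `x`, `s` and
`U* s` extends to a linear isometry `T` of the finite-dimensional space `K = S + U S`; take `T`
on `K` and the identity on `Kᗮ`. This unitary lies in the neighbourhood, and since an isometry of a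
compact set is recurrent, its iterates bring `x` back close to `x` at arbitrarily late times.
A weakly stable unitary lies outside the intersection of these dense open sets.
-/

open Set
open scoped InnerProductSpace

theorem Isometry.iterate {X : Type*} [PseudoEMetricSpace X] {T : X → X} (hT : Isometry T)
    (n : ℕ) : Isometry T^[n] := by
  induction n with
  | zero => exact isometry_id
  | succ n ih => exact ih.comp hT

theorem Isometry.exists_pos_dist_iterate_lt {X : Type*} [PseudoMetricSpace X] {T : X → X}
    (hT : Isometry T) {s : Set X} (hs : IsCompact s) (hTs : MapsTo T s s) {x : X} (hx : x ∈ s)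
    {ε : ℝ} (hε : 0 < ε) : ∃ n, 0 < n ∧ dist (T^[n] x) x < ε := by
  obtain ⟨p, -, φ, hφ, hlim⟩ := hs.tendsto_subseq fun n => hTs.iterate n hx
  obtain ⟨k, hk⟩ := Metric.cauchySeq_iff'.1 hlim.cauchySeq ε hε
  have hlt : φ k < φ (k + 1) := hφ k.lt_succ_self
  refine ⟨φ (k + 1) - φ k, by omega, ?_⟩
  calc dist (T^[φ (k + 1) - φ k] x) x
      = dist (T^[φ k] (T^[φ (k + 1) - φ k] x)) (T^[φ k] x) :=
        ((hT.iterate _).dist_eq _ _).symm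
    _ = dist (T^[φ (k + 1)] x) (T^[φ k] x) := by
      rw [← Function.iterate_add_apply, Nat.add_sub_cancel' hlt.le]
    _ < ε := hk (k + 1) k.le_succ

theorem Isometry.exists_ge_dist_iterate_lt {X : Type*} [PseudoMetricSpace X] {T : X → X}
    (hT : Isometry T) {s : Set X} (hs : IsCompact s) (hTs : MapsTo T s s) {x : X} (hx : x ∈ s)
    {ε : ℝ} (hε : 0 < ε) (N : ℕ) : ∃ n, N ≤ n ∧ dist (T^[n] x) x < ε := by
  obtain ⟨k, hk, hdist⟩ :=
    (hT.iterate (N + 1)).exists_pos_dist_iterate_lt hs (hTs.iterate (N + 1)) hx hε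
  refine ⟨(N + 1) * k, by nlinarith, ?_⟩
  rwa [Function.iterate_mul]

theorem LinearIsometryEquiv.exists_ge_norm_iterate_sub_lt {R F : Type*} [Semiring R]
    [SeminormedAddCommGroup F] [Module R F] [ProperSpace F] (T : F ≃ₗᵢ[R] F) (x : F)
    {ε : ℝ} (hε : 0 < ε) (N : ℕ) : ∃ n, N ≤ n ∧ ‖T^[n] x - x‖ < ε := by
  have hTs : MapsTo T (Metric.closedBall 0 ‖x‖) (Metric.closedBall 0 ‖x‖) := fun y hy => by
    simpa using hy
  simpa only [dist_eq_norm] using T.isometry.exists_ge_dist_iterate_lt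
    (isCompact_closedBall 0 ‖x‖) hTs (by simp) hε N

namespace LinearIsometryEquiv

variable {𝕜 E : Type*} [RCLike 𝕜] [NormedAddCommGroup E] [InnerProductSpace 𝕜 E]

noncomputable def extendById (K : Submodule 𝕜 E) [K.HasOrthogonalProjection]
    (T : K ≃ₗᵢ[𝕜] K) : E ≃ₗᵢ[𝕜] E :=
  K.orthogonalDecomposition.trans <|
    (T.withLpProdCongr 2 (LinearIsometryEquiv.refl 𝕜 Kᗮ)).trans K.orthogonalDecomposition.symm

variable {K : Submodule 𝕜 E} [K.HasOrthogonalProjection]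

theorem extendById_apply_coe (T : K ≃ₗᵢ[𝕜] K) (y : K) : extendById K T y = T y := by
  simp [extendById]

theorem iterate_extendById_apply_coe (T : K ≃ₗᵢ[𝕜] K) (y : K) (n : ℕ) :
    (extendById K T)^[n] y = T^[n] y := by
  induction n generalizing y with
  | zero => rfl
  | succ n ih =>
    rw [Function.iterate_succ_apply, Function.iterate_succ_apply, extendById_apply_coe, ih]

theorem exists_finiteDimensional_eqOn (U : E ≃ₗᵢ[𝕜] E) (S : Submodule 𝕜 E)
    [FiniteDimensional 𝕜 S] :
    ∃ K : Submodule 𝕜 E, FiniteDimensional 𝕜 K ∧ S ≤ K ∧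
      ∃ T : K ≃ₗᵢ[𝕜] K, ∀ y : K, (y : E) ∈ S → (T y : E) = U y := by
  set K := S ⊔ S.map (U : E →ₗ[𝕜] E)
  have hSK : S ≤ K := le_sup_left
  let L : S.comap K.subtype →ₗᵢ[𝕜] K :=
    { toLinearMap :=
        LinearMap.codRestrict K ((U : E →ₗ[𝕜] E) ∘ₗ K.subtype ∘ₗ Submodule.subtype _)
          fun y => le_sup_right (a := S) (Submodule.mem_map_of_mem y.2)
      norm_map' := fun y => by simp }
  refine ⟨K, inferInstance, hSK, L.extend.toLinearIsometryEquiv rfl, fun y hy => ?_⟩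
  exact congrArg Subtype.val (L.extend_apply ⟨y, hy⟩)

theorem exists_eqOn_ge_norm_iterate_sub_lt (U : E ≃ₗᵢ[𝕜] E) (S : Submodule 𝕜 E)
    [FiniteDimensional 𝕜 S] {x : E} (hx : x ∈ S) {ε : ℝ} (hε : 0 < ε) (N : ℕ) :
    ∃ V : E ≃ₗᵢ[𝕜] E, EqOn V U S ∧ ∃ n, N ≤ n ∧ ‖V^[n] x - x‖ < ε := by
  obtain ⟨K, hK, hSK, T, hT⟩ := U.exists_finiteDimensional_eqOn S
  obtain ⟨n, hn, hrec⟩ := T.exists_ge_norm_iterate_sub_lt ⟨x, hSK hx⟩ hε N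
  refine ⟨extendById K T, fun y hy => ?_, n, hn, ?_⟩
  · exact (extendById_apply_coe T ⟨y, hSK hy⟩).trans (hT _ hy)
  · rw [← Submodule.coe_mk x (hSK hx), iterate_extendById_apply_coe]
    exact_mod_cast hrec

end LinearIsometryEquiv

theorem norm_sq_sub_mul_le_norm_inner {𝕜 E : Type*} [RCLike 𝕜] [SeminormedAddCommGroup E]
    [InnerProductSpace 𝕜 E] (x y : E) : ‖x‖ ^ 2 - ‖y - x‖ * ‖x‖ ≤ ‖⟪y, x⟫_𝕜‖ := by
  have hsplit : ⟪y, x⟫_𝕜 = ⟪x, x⟫_𝕜 + ⟪y - x, x⟫_𝕜 := by rw [inner_sub_left]; ring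
  have hself : ‖⟪x, x⟫_𝕜‖ = ‖x‖ ^ 2 := by simp [inner_self_eq_norm_sq_to_K]
  calc ‖x‖ ^ 2 - ‖y - x‖ * ‖x‖
      ≤ ‖⟪x, x⟫_𝕜‖ - ‖⟪y - x, x⟫_𝕜‖ := by rw [hself]; gcongr; exact norm_inner_le_norm _ _
    _ ≤ ‖⟪y, x⟫_𝕜‖ := by rw [hsplit]; exact norm_sub_le_norm_add _ _

attribute [local instance] strongStarUnitaryTopology

section StrongStarTopology

variable {H : Type*} [NormedAddCommGroup H] [InnerProductSpace ℂ H] [CompleteSpace H]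

local notation "𝕌" => {U : H →L[ℂ] H // U ∈ unitary (H →L[ℂ] H)}

theorem continuous_unitary_apply (z : H) : Continuous fun U : 𝕌 => U.1 z := by
  have hemb : Continuous fun U : 𝕌 =>
      ((fun x => U.1 x, fun x => ContinuousLinearMap.adjoint U.1 x) : (H → H) × (H → H)) :=
    continuous_induced_dom
  exact (continuous_apply z).comp (continuous_fst.comp hemb)

theorem Continuous.unitary_apply {f : 𝕌 → H} (hf : Continuous f) :
    Continuous fun U : 𝕌 => U.1 (f U) := by
  refine continuous_iff_continuousAt.2 fun V => ?_
  have hsmall : Tendsto (fun U : 𝕌 => U.1 (f U - f V)) (𝓝 V) (𝓝 0) := by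
    have hdist := (hf.tendsto V).dist (tendsto_const_nhds (x := f V))
    rw [dist_self] at hdist
    rw [tendsto_zero_iff_norm_tendsto_zero]
    simpa only [ContinuousLinearMap.norm_map_of_mem_unitary (Subtype.prop _), ← dist_eq_norm]
      using hdist
  simpa [ContinuousAt] using hsmall.add ((continuous_unitary_apply (f V)).tendsto V)

theorem continuous_unitary_pow_apply (z : H) (n : ℕ) :
    Continuous fun U : 𝕌 => (U.1 ^ n) z := by
  induction n with
  | zero => simpa using continuous_const
  | succ n ih => simpa only [pow_succ', mul_apply_eq_comp] using ih.unitary_apply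

theorem exists_finite_eqOn_subset_of_mem_nhds {U : 𝕌} {t : Set 𝕌} (ht : t ∈ 𝓝 U) :
    ∃ s : Set H, s.Finite ∧ ∀ V : 𝕌, EqOn V.1 U.1 s →
      EqOn (ContinuousLinearMap.adjoint V.1) (ContinuousLinearMap.adjoint U.1) s → V ∈ t := by
  have hnhds : 𝓝 U = comap (fun V : 𝕌 =>
      ((fun x => V.1 x, fun x => ContinuousLinearMap.adjoint V.1 x) : (H → H) × (H → H)))
      (𝓝 (fun x => U.1 x, fun x => ContinuousLinearMap.adjoint U.1 x)) :=
    nhds_induced _ U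
  rw [hnhds, mem_comap] at ht
  obtain ⟨u, hu, hut⟩ := ht
  obtain ⟨u₁, hu₁, u₂, hu₂, hu₁₂⟩ := mem_nhds_prod_iff.1 hu
  rw [nhds_pi, Filter.mem_pi] at hu₁ hu₂
  obtain ⟨s₁, hs₁, v₁, hv₁, hsub₁⟩ := hu₁
  obtain ⟨s₂, hs₂, v₂, hv₂, hsub₂⟩ := hu₂
  refine ⟨s₁ ∪ s₂, hs₁.union hs₂, fun V hV hV' => hut (hu₁₂ ⟨hsub₁ fun z hz => ?_,
    hsub₂ fun z hz => ?_⟩)⟩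
  · show V.1 z ∈ v₁ z
    rw [hV (mem_union_left _ hz)]
    exact mem_of_mem_nhds (hv₁ z)
  · show ContinuousLinearMap.adjoint V.1 z ∈ v₂ z
    rw [hV' (mem_union_right _ hz)]
    exact mem_of_mem_nhds (hv₂ z)

def nearReturnSet (x : H) (N : ℕ) : Set 𝕌 :=
  {U | ∃ n, N ≤ n ∧ 1 / 2 < ‖⟪(U.1 ^ n) x, x⟫_ℂ‖}

theorem isOpen_nearReturnSet (x : H) (N : ℕ) : IsOpen (nearReturnSet x N) := by
  have hunion : nearReturnSet x N =
      ⋃ n, ⋃ (_ : N ≤ n), {U : 𝕌 | 1 / 2 < ‖⟪(U.1 ^ n) x, x⟫_ℂ‖} := by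
    ext; simp [nearReturnSet]
  rw [hunion]
  exact isOpen_iUnion fun n => isOpen_iUnion fun _ => isOpen_lt continuous_const
    ((continuous_unitary_pow_apply x n).inner continuous_const).norm

theorem dense_nearReturnSet {x : H} (hx : ‖x‖ = 1) (N : ℕ) : Dense (nearReturnSet x N) := by
  refine fun U => mem_closure_iff_nhds.2 fun t ht => ?_
  obtain ⟨s, hs, hst⟩ := exists_finite_eqOn_subset_of_mem_nhds ht
  set e := Unitary.linearIsometryEquiv U
  set S := Submodule.span ℂ (insert x (s ∪ e.symm '' s))
  have : FiniteDimensional ℂ S :=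
    FiniteDimensional.span_of_finite ℂ ((hs.union (hs.image _)).insert x)
  obtain ⟨V, hVS, n, hn, hrec⟩ := e.exists_eqOn_ge_norm_iterate_sub_lt S
    (Submodule.subset_span (mem_insert _ _)) one_half_pos N
  refine ⟨Unitary.linearIsometryEquiv.symm V, hst _ ?_ ?_, n, hn, ?_⟩
  · exact fun z hz => hVS (Submodule.subset_span (mem_insert_of_mem _ (mem_union_left _ hz)))
  · intro z hz
    change ContinuousLinearMap.adjoint (V : H →L[ℂ] H) z =
      ContinuousLinearMap.adjoint (e : H →L[ℂ] H) z
    rw [V.adjoint_eq_symm, e.adjoint_eq_symm]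
    change V.symm z = e.symm z
    rw [V.symm_apply_eq, hVS (Submodule.subset_span
      (mem_insert_of_mem _ (mem_union_right _ (mem_image_of_mem _ hz)))), e.apply_symm_apply]
  · have hinner := norm_sq_sub_mul_le_norm_inner (𝕜 := ℂ) x (V^[n] x)
    rw [hx] at hinner
    change 1 / 2 < ‖⟪((V : H →L[ℂ] H) ^ n) x, x⟫_ℂ‖
    rw [FunLike.coe_pow_eq_iterate]
    change 1 / 2 < ‖⟪V^[n] x, x⟫_ℂ‖
    linarith

end StrongStarTopology

theorem stmt10_general {H : Type*} [NormedAddCommGroup H] [InnerProductSpace ℂ H] [CompleteSpace H]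
    (hinf : ¬ FiniteDimensional ℂ H) :
    @IsMeagre {U : H →L[ℂ] H // U ∈ unitary (H →L[ℂ] H)} strongStarUnitaryTopology
      {U | ∀ x y : H,
        Tendsto (fun n : ℕ => (inner ℂ ((U.1 ^ n) x) y : ℂ)) atTop (𝓝 0)} := by
  have : Nontrivial H := not_subsingleton_iff_nontrivial.1 fun _ => hinf inferInstance
  obtain ⟨x, hx⟩ := exists_norm_eq H zero_le_one
  have hresidual : (⋂ N, nearReturnSet x N) ∈ residual _ := countable_iInter_mem.2 fun N =>
    residual_of_dense_open (isOpen_nearReturnSet x N) (dense_nearReturnSet hx N)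
  refine mem_of_superset hresidual fun U hU hstable => ?_
  obtain ⟨N, hN⟩ := eventually_atTop.1 ((hstable x x).norm.eventually
    (gt_mem_nhds (show ‖(0 : ℂ)‖ < 1 / 2 by norm_num)))
  obtain ⟨n, hn, hlarge⟩ := mem_iInter.1 hU N
  exact (hN n hn).not_gt hlarge

/-- In the space of unitary operators on a separable infinite-dimensional Hilbert space,
endowed with the strong* operator topology, the weakly stable unitaries form a set of
first category (a meager set). -/
theorem stmt10 {H : Type*} [NormedAddCommGroup H] [InnerProductSpace ℂ H] [CompleteSpace H]
    [TopologicalSpace.SeparableSpace H] (hinf : ¬ FiniteDimensional ℂ H) :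
    @IsMeagre {U : H →L[ℂ] H // U ∈ unitary (H →L[ℂ] H)} strongStarUnitaryTopology
      {U | ∀ x y : H,
        Tendsto (fun n : ℕ => (inner ℂ ((U.1 ^ n) x) y : ℂ)) atTop (𝓝 0)} :=
  stmt10_general hinf
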